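/- arXiv:2501.05061 — 12 statements merged into one kernel-verified Lean document; each statement's English description precedes it below -/
import Mathlib

section
/- Let a₁, a₂, w_s, u₀ ∈ ℝ with a₁a₂ ≠ 0, a₁² ≠ a₂², w_s ≠ 0 and u₀ ≠ 0, and suppose that a₁u₀ + a₂/u₀ = w_s and a₁/u₀ + a₂u₀ = −1/w_s. Then u₀ = (w_s a₁ + a₂/w_s)/(a₁² − a₂²), and moreover (a₁² − a₂²)² + a₁² + a₂² + a₁a₂(w_s² + 1/w_s²) = 0. -/
/-!
Write `D = a₁² - a₂²`. In `a₁ ζ(u₀) - a₂ ζ(1/u₀)` and `a₁ ζ(1/u₀) - a₂ ζ(u₀)` the cross terms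
cancel, so the two pole conditions give `D u₀ = a₁ w_s + a₂ / w_s` and
`D / u₀ = -(a₁ / w_s + a₂ w_s)`. The first is the formula for `u₀`; multiplying the two gives
`D² = -(a₁ w_s + a₂ / w_s)(a₁ / w_s + a₂ w_s)`, and expanding the product is the second claim.
-/

section PoleConditions

variable {K : Type*} [Field K] {a₁ a₂ w u : K}

theorem sq_sub_sq_mul_eq_of_pole (h₁ : a₁ * u + a₂ / u = w) (h₂ : a₁ / u + a₂ * u = -1 / w) :
    (a₁ ^ 2 - a₂ ^ 2) * u = a₁ * w + a₂ / w := by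
  linear_combination a₁ * h₁ - a₂ * h₂

theorem sq_sub_sq_div_eq_of_pole (h₁ : a₁ * u + a₂ / u = w) (h₂ : a₁ / u + a₂ * u = -1 / w) :
    (a₁ ^ 2 - a₂ ^ 2) / u = -(a₁ / w + a₂ * w) := by
  linear_combination a₁ * h₂ - a₂ * h₁

theorem sq_sub_sq_sq_eq_of_pole (hu : u ≠ 0) (h₁ : a₁ * u + a₂ / u = w)
    (h₂ : a₁ / u + a₂ * u = -1 / w) :
    (a₁ ^ 2 - a₂ ^ 2) ^ 2 = -((a₁ * w + a₂ / w) * (a₁ / w + a₂ * w)) := by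
  calc (a₁ ^ 2 - a₂ ^ 2) ^ 2 = ((a₁ ^ 2 - a₂ ^ 2) * u) * ((a₁ ^ 2 - a₂ ^ 2) / u) := by
        field_simp
    _ = -((a₁ * w + a₂ / w) * (a₁ / w + a₂ * w)) := by
        rw [sq_sub_sq_mul_eq_of_pole h₁ h₂, sq_sub_sq_div_eq_of_pole h₁ h₂, mul_neg]

end PoleConditions

theorem stmt_2_general (a₁ a₂ ws u₀ : ℝ)
    (h2 : a₁ ^ 2 ≠ a₂ ^ 2) (h3 : ws ≠ 0) (h4 : u₀ ≠ 0)
    (h5 : a₁ * u₀ + a₂ / u₀ = ws) (h6 : a₁ / u₀ + a₂ * u₀ = -1 / ws) :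
    u₀ = (ws * a₁ + a₂ / ws) / (a₁ ^ 2 - a₂ ^ 2) ∧
    (a₁ ^ 2 - a₂ ^ 2) ^ 2 + a₁ ^ 2 + a₂ ^ 2 + a₁ * a₂ * (ws ^ 2 + 1 / ws ^ 2) = 0 := by
  constructor
  · rw [eq_div_iff (sub_ne_zero.mpr h2), mul_comm, mul_comm ws,
      sq_sub_sq_mul_eq_of_pole h5 h6]
  · rw [sq_sub_sq_sq_eq_of_pole h4 h5 h6]
    field_simp
    ring

theorem stmt_2 (a₁ a₂ ws u₀ : ℝ)
    (h1 : a₁ * a₂ ≠ 0) (h2 : a₁ ^ 2 ≠ a₂ ^ 2) (h3 : ws ≠ 0) (h4 : u₀ ≠ 0)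
    (h5 : a₁ * u₀ + a₂ / u₀ = ws) (h6 : a₁ / u₀ + a₂ * u₀ = -1 / ws) :
    u₀ = (ws * a₁ + a₂ / ws) / (a₁ ^ 2 - a₂ ^ 2) ∧
    (a₁ ^ 2 - a₂ ^ 2) ^ 2 + a₁ ^ 2 + a₂ ^ 2 + a₁ * a₂ * (ws ^ 2 + 1 / ws ^ 2) = 0 :=
  stmt_2_general a₁ a₂ ws u₀ h2 h3 h4 h5 h6
end

section
/- Let w_s > 1 and Q₀ > 0, and let x ∈ ℝ with x ∉ {−1, 0, 1, 1/w_s²}. Set a₂² = (x(1 + w_s⁴) − (1 + x²)w_s²)/((1 − x²)² w_s²). Then the equation Q₀w_s²(a₂²(x⁴ − 1) + xw_s² − 1) = x(1 + Q₀)(w_s²x − 1 + 2a₂²(x² − 1)) holds if and only if 1 − (2(1 + Q₀(1 + w_s⁴))/((1 + 2Q₀)w_s²))x + x² = 0. -/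
theorem stmt_5 (ws Q₀ x : ℝ) (hws : ws > 1) (hQ : Q₀ > 0)
    (hx1 : x ≠ -1) (hx2 : x ≠ 0) (hx3 : x ≠ 1) (hx4 : x ≠ 1 / ws ^ 2)
    (a₂sq : ℝ)
    (ha : a₂sq = (x * (1 + ws ^ 4) - (1 + x ^ 2) * ws ^ 2) / ((1 - x ^ 2) ^ 2 * ws ^ 2)) :
    (Q₀ * ws ^ 2 * (a₂sq * (x ^ 4 - 1) + x * ws ^ 2 - 1) =
        x * (1 + Q₀) * (ws ^ 2 * x - 1 + 2 * a₂sq * (x ^ 2 - 1))) ↔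
      (1 - (2 * (1 + Q₀ * (1 + ws ^ 4)) / ((1 + 2 * Q₀) * ws ^ 2)) * x + x ^ 2 = 0) := by
  have hws0 : ws ≠ 0 := by positivity
  have hws2 : ws ^ 2 ≠ 0 := pow_ne_zero _ hws0
  have h1x : (1 - x ^ 2) ≠ 0 := by
    have h1 : 1 - x ≠ 0 := sub_ne_zero.2 (Ne.symm hx3)
    have h2 : 1 + x ≠ 0 := fun h => hx1 (by linarith)
    have h3 : (1 - x) * (1 + x) ≠ 0 := mul_ne_zero h1 h2
    intro h; exact h3 (by linarith [h]; )
  have hx4' : ws ^ 2 * x - 1 ≠ 0 := by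
    intro h
    apply hx4
    field_simp
    linarith
  have hQd : (1 + 2 * Q₀) * ws ^ 2 ≠ 0 := by positivity
  subst ha
  constructor
  · intro h
    field_simp at h ⊢
    have h' : (1 - x ^ 2) * x * (ws ^ 2 * x - 1) *
        ((1 + 2 * Q₀) * ws ^ 2 * (1 + x ^ 2) - 2 * (1 + Q₀ * (1 + ws ^ 4)) * x) = 0 := by
      linear_combination h
    have hG := (mul_eq_zero.mp h').resolve_left
      (mul_ne_zero (mul_ne_zero h1x hx2) hx4')
    linear_combination hG
  · intro h
    field_simp at h ⊢
    linear_combination ((1 - x ^ 2) * x * (ws ^ 2 * x - 1)) * h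
end

section
/- Let w_s > 1 and Q₀ > 0 satisfy Q₀(w_s² − 1) > 1. Then the quadratic equation x² − (2(1 + Q₀(1 + w_s⁴))/((1 + 2Q₀)w_s²))x + 1 = 0 has two distinct positive real roots whose product is 1, exactly one of these roots lies in the open interval (0, 1), and this root satisfies x > 1/w_s². -/
theorem stmt_6 (ws Q₀ : ℝ) (hws : ws > 1) (hQ : Q₀ > 0) (hc : Q₀ * (ws ^ 2 - 1) > 1) :
    ∃ x₁ x₂ : ℝ, x₁ ≠ x₂ ∧ 0 < x₁ ∧ 0 < x₂ ∧ x₁ * x₂ = 1 ∧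
      (x₁ ^ 2 - (2 * (1 + Q₀ * (1 + ws ^ 4)) / ((1 + 2 * Q₀) * ws ^ 2)) * x₁ + 1 = 0) ∧
      (x₂ ^ 2 - (2 * (1 + Q₀ * (1 + ws ^ 4)) / ((1 + 2 * Q₀) * ws ^ 2)) * x₂ + 1 = 0) ∧
      (∀ x : ℝ, x ^ 2 - (2 * (1 + Q₀ * (1 + ws ^ 4)) / ((1 + 2 * Q₀) * ws ^ 2)) * x + 1 = 0 →
        x = x₁ ∨ x = x₂) ∧
      (0 < x₁ ∧ x₁ < 1) ∧ ¬ (0 < x₂ ∧ x₂ < 1) ∧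
      1 / ws ^ 2 < x₁ := by
  have hws0 : (0:ℝ) < ws := lt_trans one_pos hws
  have hden : (0:ℝ) < (1 + 2 * Q₀) * ws ^ 2 := by positivity
  set c : ℝ := 2 * (1 + Q₀ * (1 + ws ^ 4)) / ((1 + 2 * Q₀) * ws ^ 2) with hc_def
  have hb : 2 < c := by
    rw [hc_def, lt_div_iff₀ hden]
    nlinarith [sq_nonneg (ws ^ 2 - 1), hc, hws, hQ]
  have hnn : (0:ℝ) ≤ c ^ 2 / 4 - 1 := by nlinarith
  set s := Real.sqrt (c ^ 2 / 4 - 1) with hs_def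
  have hs2 : s ^ 2 = c ^ 2 / 4 - 1 := Real.sq_sqrt hnn
  have hs_pos : 0 < s := Real.sqrt_pos.mpr (by nlinarith)
  have hs_lt : s < c / 2 := by nlinarith
  have hfws : 0 < ws ^ 4 - c * ws ^ 2 + 1 := by
    have heq : ws ^ 4 - c * ws ^ 2 + 1 = ws ^ 2 * (ws ^ 4 - 1) / ((1 + 2 * Q₀) * ws ^ 2) := by
      rw [hc_def]; field_simp; ring
    rw [heq]
    have h1 : 0 < ws ^ 4 - 1 := by nlinarith
    positivity
  have hx1pos : 0 < c / 2 - s := by linarith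
  have hx2gt1 : 1 < c / 2 + s := by linarith
  have hprod : (c / 2 - s) * (c / 2 + s) = 1 := by linear_combination -hs2
  have hx1lt1 : c / 2 - s < 1 := by
    nlinarith [mul_pos hx1pos (show (0:ℝ) < c / 2 + s - 1 by linarith)]
  have hws2gt : c / 2 + s < ws ^ 2 := by
    by_contra h
    push_neg at h
    have hA : (0:ℝ) < ws ^ 2 - (c / 2 - s) := by nlinarith
    nlinarith [mul_nonneg hA.le (show (0:ℝ) ≤ c / 2 + s - ws ^ 2 by linarith)]
  refine ⟨c / 2 - s, c / 2 + s, by intro h; linarith [hs_pos], hx1pos, by linarith, hprod,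
    by linear_combination hs2, by linear_combination hs2, ?_, ⟨hx1pos, hx1lt1⟩,
    by push_neg; intro _; linarith, ?_⟩
  · intro x hx
    have : (x - (c / 2 - s)) * (x - (c / 2 + s)) = 0 := by linear_combination hx - hs2
    rcases mul_eq_zero.mp this with h | h
    · left; linarith
    · right; linarith
  · rw [div_lt_iff₀ (by positivity)]
    nlinarith
end

section
/- Let R > 0 and α, β, w ∈ ℝ with w ≠ 0, α ≠ 0 and β + w + (1 − βw)α ≠ 0. Set a = Rα, b = β/R, and define ζ(u) = (R/u)(1 − bu)/(1 − au). Suppose v₀ ∈ ℝ \ {0} satisfies 1 − av₀ ≠ 0, v₀ − a ≠ 0, ζ(v₀) = w and ζ(1/v₀) = −1/w. Then, with 𝒜 := (1 + α²)/(β + w + (1 − βw)α), one has v₀ = R𝒜 and R² = ((β + w)𝒜 − 1)/(αw𝒜²). -/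
/-!
Clearing denominators, `ζ(v₀) = w` and `ζ(1/v₀) = -1/w` become two quadratic equations in `v₀`
whose `v₀²`-terms differ by the factor `α`. Eliminating `v₀²` leaves the linear equation
`(β + w + (1 - βw)α) v₀ = R(1 + α²)`, and substituting this `v₀` back into the second
quadratic gives `R²`.
-/

section DropletMap

variable {R α β w v : ℝ}

lemma droplet_quadratic_of_map_eq (hR : R ≠ 0) (hv : v ≠ 0) (hpole : 1 - R * α * v ≠ 0)
    (h : R / v * (1 - β / R * v) / (1 - R * α * v) = w) :
    R - β * v = w * v - R * α * w * v ^ 2 := by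
  rw [div_eq_iff hpole] at h
  field_simp at h
  linear_combination h

lemma droplet_quadratic_of_map_inv_eq (hR : R ≠ 0) (hv : v ≠ 0) (hw : w ≠ 0)
    (hpole : v - R * α ≠ 0)
    (h : R / (1 / v) * (1 - β / R * (1 / v)) / (1 - R * α * (1 / v)) = -1 / w) :
    R * w * v ^ 2 - β * w * v = R * α - v := by
  field_simp at h
  linear_combination h

lemma mul_denom_eq_of_droplet_quadratics (h₁ : R - β * v = w * v - R * α * w * v ^ 2)
    (h₂ : R * w * v ^ 2 - β * w * v = R * α - v) :
    v * (β + w + (1 - β * w) * α) = R * (1 + α ^ 2) := by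
  linear_combination -h₁ + α * h₂

lemma sq_eq_of_droplet_quadratic (hR : R ≠ 0) (hw : w ≠ 0) (hα : α ≠ 0)
    (hden : β + w + (1 - β * w) * α ≠ 0)
    (hlin : v * (β + w + (1 - β * w) * α) = R * (1 + α ^ 2))
    (h₂ : R * w * v ^ 2 - β * w * v = R * α - v) :
    R ^ 2 = ((β + w) * ((1 + α ^ 2) / (β + w + (1 - β * w) * α)) - 1) /
      (α * w * ((1 + α ^ 2) / (β + w + (1 - β * w) * α)) ^ 2) := by
  set D := β + w + (1 - β * w) * α with hD
  have hquad : w * (1 + α ^ 2) * (R ^ 2 * (1 + α ^ 2) - β * D) = α * D ^ 2 - (1 + α ^ 2) * D :=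
    mul_left_cancel₀ hR (by
      linear_combination D ^ 2 * h₂ -
        (R * w * (v * D + R * (1 + α ^ 2)) - β * w * D + D) * hlin)
  field_simp
  linear_combination α * hquad + D * (1 + α ^ 2) * hD

end DropletMap

theorem stmt_7 (R α β w : ℝ) (hR : R > 0) (hw : w ≠ 0) (hα : α ≠ 0)
    (hden : β + w + (1 - β * w) * α ≠ 0)
    (a b : ℝ) (ha : a = R * α) (hb : b = β / R)
    (ζ : ℝ → ℝ) (hζ : ∀ u, ζ u = (R / u) * (1 - b * u) / (1 - a * u))
    (v₀ : ℝ) (hv₀ : v₀ ≠ 0) (h1 : 1 - a * v₀ ≠ 0) (h2 : v₀ - a ≠ 0)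
    (h3 : ζ v₀ = w) (h4 : ζ (1 / v₀) = -1 / w) :
    v₀ = R * ((1 + α ^ 2) / (β + w + (1 - β * w) * α)) ∧
    R ^ 2 = ((β + w) * ((1 + α ^ 2) / (β + w + (1 - β * w) * α)) - 1) /
      (α * w * ((1 + α ^ 2) / (β + w + (1 - β * w) * α)) ^ 2) := by
  subst ha hb
  rw [hζ] at h3 h4
  have hR0 : R ≠ 0 := hR.ne'
  have hq₁ := droplet_quadratic_of_map_eq hR0 hv₀ h1 h3
  have hq₂ := droplet_quadratic_of_map_inv_eq hR0 hv₀ hw h2 h4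
  have hlin := mul_denom_eq_of_droplet_quadratics hq₁ hq₂
  refine ⟨?_, sq_eq_of_droplet_quadratic hR0 hw hα hden hlin hq₂⟩
  rw [← mul_div_assoc, eq_div_iff hden]
  exact hlin
end

section
/- Let R > 0 and 0 < a < b < 1. Then the quadratic equation (a + R²b)u² − (1 + a² + R² + R²b²)u + (a + R²b) = 0 has two distinct positive real roots whose product equals 1, and its smaller root v₀ satisfies a < v₀ < b. -/
/-!
The equation is palindromic, `A u² - B u + A = 0` with `A = a + R²b` and
`B - 2A = (1 - a)² + R²(1 - b)² > 0`, so its roots are real, distinct, positive and reciprocal,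
and the quadratic factors as `A (u - v₀)(u - v₁)` with `v₀ < 1 < v₁`. The location of `v₀` is read
off from the signs of the quadratic at the endpoints:
its value at `a` is `R²(b - a)(1 - ab) > 0` and its value at `b` is `-(b - a)(1 - ab) < 0`.
-/

lemma exists_factorization_of_palindromic_quadratic {A B : ℝ} (hA : 0 < A) (hAB : 2 * A < B) :
    ∃ v₀ v₁ : ℝ, 0 < v₀ ∧ v₀ < v₁ ∧ v₀ * v₁ = 1 ∧
      ∀ u : ℝ, A * u ^ 2 - B * u + A = A * ((u - v₀) * (u - v₁)) := by
  have hdisc : 0 < B ^ 2 - 4 * A ^ 2 := by nlinarith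
  set s := Real.sqrt (B ^ 2 - 4 * A ^ 2)
  have hs : 0 < s := Real.sqrt_pos.mpr hdisc
  have hs_sq : s ^ 2 = B ^ 2 - 4 * A ^ 2 := Real.sq_sqrt hdisc.le
  have hsB : s < B := by nlinarith
  refine ⟨(B - s) / (2 * A), (B + s) / (2 * A), by positivity, by gcongr; linarith, ?_, ?_⟩
  · field_simp
    linear_combination -hs_sq
  · intro u
    field_simp
    linear_combination hs_sq

lemma lt_left_root_of_mul_pos {A v₀ v₁ c : ℝ} (hA : 0 < A) (hc : c < v₁)
    (h : 0 < A * ((c - v₀) * (c - v₁))) : c < v₀ := by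
  by_contra! hle
  nlinarith [mul_nonpos_of_nonneg_of_nonpos (sub_nonneg.mpr hle) (sub_neg.mpr hc).le]

lemma left_root_lt_of_mul_neg {A v₀ v₁ d : ℝ} (hA : 0 < A) (hv : v₀ ≤ v₁)
    (h : A * ((d - v₀) * (d - v₁)) < 0) : v₀ < d := by
  by_contra! hle
  nlinarith [mul_nonneg (sub_nonneg.mpr hle) (sub_nonneg.mpr (hle.trans hv))]

theorem stmt_8 (R a b : ℝ) (hR : R > 0) (ha : 0 < a) (hab : a < b) (hb : b < 1) :
    ∃ v₀ v₁ : ℝ, v₀ < v₁ ∧ 0 < v₀ ∧ 0 < v₁ ∧ v₀ * v₁ = 1 ∧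
      ((a + R ^ 2 * b) * v₀ ^ 2 - (1 + a ^ 2 + R ^ 2 + R ^ 2 * b ^ 2) * v₀ + (a + R ^ 2 * b) = 0) ∧
      ((a + R ^ 2 * b) * v₁ ^ 2 - (1 + a ^ 2 + R ^ 2 + R ^ 2 * b ^ 2) * v₁ + (a + R ^ 2 * b) = 0) ∧
      (∀ u : ℝ,
        (a + R ^ 2 * b) * u ^ 2 - (1 + a ^ 2 + R ^ 2 + R ^ 2 * b ^ 2) * u + (a + R ^ 2 * b) = 0 →
        u = v₀ ∨ u = v₁) ∧
      a < v₀ ∧ v₀ < b := by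
  have hb₀ : 0 < b := ha.trans hab
  have hA : 0 < a + R ^ 2 * b := by positivity
  have hAB : 2 * (a + R ^ 2 * b) < 1 + a ^ 2 + R ^ 2 + R ^ 2 * b ^ 2 := by
    nlinarith [mul_pos (pow_pos hR 2) (pow_pos (sub_pos.mpr hb) 2), sq_nonneg (1 - a)]
  obtain ⟨v₀, v₁, hv₀, hlt, hprod, hfac⟩ :=
    exists_factorization_of_palindromic_quadratic hA hAB
  have hv₁ : 1 < v₁ := by nlinarith
  have hab' : 0 < (b - a) * (1 - a * b) := mul_pos (by linarith) (by nlinarith)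
  refine ⟨v₀, v₁, hlt, hv₀, by linarith, hprod, by simp [hfac], by simp [hfac], ?_, ?_, ?_⟩
  · intro u hu
    simpa [hfac, hA.ne', sub_eq_zero] using hu
  · refine lt_left_root_of_mul_pos hA (by linarith) ?_
    rw [← hfac]
    calc 0 < R ^ 2 * ((b - a) * (1 - a * b)) := mul_pos (pow_pos hR 2) hab'
      _ = _ := by ring
  · refine left_root_lt_of_mul_neg hA hlt.le ?_
    rw [← hfac]
    calc _ = -((b - a) * (1 - a * b)) := by ring
      _ < 0 := neg_neg_of_pos hab'
end

section
/- Let R > 0, 0 < a < b, Q₀ > 0, Q₁ > 0 and w ∈ ℝ, and define ζ(u) = (R/u)(1 − bu)/(1 − au) for u ∈ ℂ \ {0, 1/a}. Then the function u ↦ ζ(u)·[ζ(1/u)/(1 + ζ(u)ζ(1/u)) − (Q₁/(1 + Q₀ + Q₁))·1/(ζ(u) − w)] tends, as u → 0 with u ≠ 0, to (R²b/a)/(1 + R²b/a) − Q₁/(1 + Q₀ + Q₁). Moreover, this limiting value equals 1/(1 + Q₀ + Q₁) if and only if R²b/a = (1 + Q₁)/Q₀. -/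
/-!
Write `P(u) = ζ(u) ζ(1/u)`. The expression equals `P/(1 + P) - c · ζ/(ζ - w)`, where
`c = Q₁/(1 + Q₀ + Q₁)`. Since `ζ` has a simple pole at `0`, `ζ/(ζ - w) = (1 - w/ζ)⁻¹ → 1`, while
`P(u) = R² (1 - bu)(u - b)/((1 - au)(u - a))` is continuous at `0` with value `R² b/a`. The
equivalence is then linear algebra in `R² b/a`.
-/

open Filter Topology Bornology

section NormedField

variable {𝕜 : Type*} [NormedField 𝕜]

theorem tendsto_mul_inv_nhdsNE_zero_cobounded {h : 𝕜 → 𝕜} (hh : ContinuousAt h 0)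
    (h0 : h 0 ≠ 0) : Tendsto (fun u => h u * u⁻¹) (𝓝[≠] 0) (cobounded 𝕜) := by
  rw [← tendsto_norm_atTop_iff_cobounded]
  simp_rw [norm_mul]
  exact (tendsto_nhdsWithin_of_tendsto_nhds hh).norm.pos_mul_atTop (norm_pos_iff.2 h0)
    (tendsto_norm_cobounded_atTop.comp tendsto_inv₀_nhdsNE_zero)

theorem tendsto_mul_sub_of_tendsto_cobounded {α : Type*} {l : Filter α} {f g : α → 𝕜}
    {K c w : 𝕜} (hf : Tendsto f l (cobounded 𝕜)) (hfg : Tendsto (fun x => f x * g x) l (𝓝 K))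
    (hK : 1 + K ≠ 0) :
    Tendsto (fun x => f x * (g x / (1 + f x * g x) - c * (1 / (f x - w)))) l
      (𝓝 (K / (1 + K) - c)) := by
  have hfrac : Tendsto (fun x => f x * g x / (1 + f x * g x)) l (𝓝 (K / (1 + K))) :=
    hfg.div (tendsto_const_nhds.add hfg) hK
  have hratio : Tendsto (fun x => (1 - w * (f x)⁻¹)⁻¹) l (𝓝 1) := by
    have hinv := (tendsto_const_nhds (x := w)).mul (tendsto_inv₀_cobounded.comp hf)
    simpa using (tendsto_const_nhds (x := (1 : 𝕜)).sub hinv).inv₀ (by simp)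
  have hlim := hfrac.sub (hratio.const_mul c)
  rw [mul_one] at hlim
  refine hlim.congr' ?_
  filter_upwards [hf.eventually_ne_cobounded 0] with x hx
  rw [← div_eq_mul_inv w, one_sub_div hx, inv_div]
  ring

def zetaMap (R a b u : 𝕜) : 𝕜 :=
  R / u * (1 - b * u) / (1 - a * u)

theorem tendsto_zetaMap_cobounded {R : 𝕜} (hR : R ≠ 0) (a b : 𝕜) :
    Tendsto (zetaMap R a b) (𝓝[≠] 0) (cobounded 𝕜) := by
  have hcont : ContinuousAt (fun u : 𝕜 => R * (1 - b * u) / (1 - a * u)) 0 :=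
    ContinuousAt.div (by fun_prop) (by fun_prop) (by simp)
  convert tendsto_mul_inv_nhdsNE_zero_cobounded hcont (by simpa using hR) using 2 with u
  simp only [zetaMap]
  ring

theorem zetaMap_mul_zetaMap_one_div (R a b : 𝕜) {u : 𝕜} (hu : u ≠ 0) :
    zetaMap R a b u * zetaMap R a b (1 / u) =
      R ^ 2 * (1 - b * u) * (u - b) / ((1 - a * u) * (u - a)) := by
  have hinv : (1 - b * (1 / u)) / (1 - a * (1 / u)) = (u - b) / (u - a) := by
    rw [mul_one_div, mul_one_div, one_sub_div hu, one_sub_div hu,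
      div_div_div_cancel_right₀ hu]
  simp only [zetaMap, mul_div_assoc, hinv]
  field_simp

theorem tendsto_zetaMap_mul_zetaMap_one_div {a : 𝕜} (ha : a ≠ 0) (R b : 𝕜) :
    Tendsto (fun u => zetaMap R a b u * zetaMap R a b (1 / u)) (𝓝[≠] 0)
      (𝓝 (R ^ 2 * b / a)) := by
  have hcont : ContinuousAt
      (fun u : 𝕜 => R ^ 2 * (1 - b * u) * (u - b) / ((1 - a * u) * (u - a))) 0 :=
    ContinuousAt.div (by fun_prop) (by fun_prop) (by simpa using ha)
  have hval : R ^ 2 * (1 - b * 0) * (0 - b) / ((1 - a * 0) * (0 - a)) = R ^ 2 * b / a := by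
    simp only [mul_zero, sub_zero, zero_sub, one_mul, mul_one, mul_neg, neg_div_neg_eq]
  rw [← hval]
  refine (tendsto_nhdsWithin_of_tendsto_nhds hcont.tendsto).congr' ?_
  filter_upwards [self_mem_nhdsWithin] with u hu
  exact (zetaMap_mul_zetaMap_one_div R a b hu).symm

end NormedField

theorem div_one_add_sub_div_eq_one_div_iff {K Q₀ Q₁ : ℝ} (hK : 1 + K ≠ 0)
    (hS : 1 + Q₀ + Q₁ ≠ 0) (hQ₀ : Q₀ ≠ 0) :
    K / (1 + K) - Q₁ / (1 + Q₀ + Q₁) = 1 / (1 + Q₀ + Q₁) ↔ K = (1 + Q₁) / Q₀ := by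
  rw [sub_eq_iff_eq_add, ← add_div, div_eq_div_iff hK hS, eq_div_iff hQ₀]
  constructor <;> intro h <;> linear_combination h

theorem stmt_9 (R a b Q₀ Q₁ w : ℝ) (hR : R > 0) (ha : 0 < a) (hab : a < b)
    (hQ₀ : Q₀ > 0) (hQ₁ : Q₁ > 0)
    (ζ : ℂ → ℂ)
    (hζ : ∀ u : ℂ, u ≠ 0 → u ≠ 1 / (a : ℂ) →
      ζ u = ((R : ℂ) / u) * (1 - (b : ℂ) * u) / (1 - (a : ℂ) * u)) :
    Filter.Tendsto
      (fun u : ℂ => ζ u *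
        (ζ (1 / u) / (1 + ζ u * ζ (1 / u)) -
          ((Q₁ / (1 + Q₀ + Q₁) : ℝ) : ℂ) * (1 / (ζ u - (w : ℂ)))))
      (nhdsWithin 0 {(0 : ℂ)}ᶜ)
      (nhds (((R ^ 2 * b / a) / (1 + R ^ 2 * b / a) - Q₁ / (1 + Q₀ + Q₁) : ℝ) : ℂ)) ∧
    ((R ^ 2 * b / a) / (1 + R ^ 2 * b / a) - Q₁ / (1 + Q₀ + Q₁) = 1 / (1 + Q₀ + Q₁) ↔
      R ^ 2 * b / a = (1 + Q₁) / Q₀) := by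
  have hb : 0 < b := ha.trans hab
  have haC : (a : ℂ) ≠ 0 := Complex.ofReal_ne_zero.2 ha.ne'
  have hζ_eq : ∀ᶠ u in 𝓝[≠] (0 : ℂ),
      ζ u = zetaMap (R : ℂ) a b u ∧ ζ (1 / u) = zetaMap (R : ℂ) a b (1 / u) := by
    filter_upwards [self_mem_nhdsWithin, eventually_ne_nhdsWithin (one_div_ne_zero haC).symm,
      eventually_ne_nhdsWithin haC.symm] with u hu hu_ne_inv hu_ne
    exact ⟨hζ u hu hu_ne_inv, hζ (1 / u) (one_div_ne_zero hu) (by simpa using hu_ne)⟩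
  refine ⟨?_, div_one_add_sub_div_eq_one_div_iff (by positivity) (by positivity) hQ₀.ne'⟩
  have hpole : Tendsto ζ (𝓝[≠] 0) (cobounded ℂ) :=
    (tendsto_zetaMap_cobounded (Complex.ofReal_ne_zero.2 hR.ne') (a : ℂ) (b : ℂ)).congr'
      (hζ_eq.mono fun _ h => h.1.symm)
  have hprod : Tendsto (fun u => ζ u * ζ (1 / u)) (𝓝[≠] 0) (𝓝 ((R : ℂ) ^ 2 * b / a)) :=
    (tendsto_zetaMap_mul_zetaMap_one_div haC (R : ℂ) (b : ℂ)).congr'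
      (hζ_eq.mono fun _ h => by simp only [h.1, h.2])
  have hlim := tendsto_mul_sub_of_tendsto_cobounded (c := ((Q₁ / (1 + Q₀ + Q₁) : ℝ) : ℂ))
    (w := (w : ℂ)) hpole hprod
    (by exact_mod_cast (by positivity : (0 : ℝ) < 1 + R ^ 2 * b / a).ne')
  exact_mod_cast hlim
end

section
/- Let R > 0 and a, b ∈ ℝ, define ζ(u) = (R/u)(1 − bu)/(1 − au), and let v₀ ∈ ℝ \ {0} and w ≠ 0 with 1 − av₀ ≠ 0 and v₀ − a ≠ 0 satisfy ζ(v₀) = w and ζ(1/v₀) = −1/w. Assume ζ'(v₀) ≠ 0 and v₀²ζ'(v₀) + w²ζ'(1/v₀) ≠ 0. Then the function u ↦ ζ(1/u)(ζ(u) − w)/(1 + ζ(u)ζ(1/u)) tends, as u → v₀ with u ≠ v₀, to v₀²ζ'(v₀)/(v₀²ζ'(v₀) + w²ζ'(1/v₀)). -/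
/-!
Numerator and denominator both vanish at `v₀`, the denominator because
`ζ v₀ * ζ (1 / v₀) = -1`. At a common zero `f / g` is the quotient of the slopes of `f` and `g`,
so L'Hôpital's rule holds using only the derivatives at the point, here those of `ζ` at `v₀`
and at `1 / v₀`.
-/

open Filter Topology

theorem tendsto_div_nhdsNE_of_hasDerivAt {𝕜 : Type*} [NontriviallyNormedField 𝕜]
    {f g : 𝕜 → 𝕜} {f' g' x : 𝕜} (hf : HasDerivAt f f' x) (hg : HasDerivAt g g' x)
    (hfx : f x = 0) (hgx : g x = 0) (hg' : g' ≠ 0) :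
    Tendsto (fun u => f u / g u) (𝓝[≠] x) (𝓝 (f' / g')) := by
  have hslope := (hasDerivAt_iff_tendsto_slope.mp hf).div (hasDerivAt_iff_tendsto_slope.mp hg) hg'
  refine hslope.congr' ?_
  filter_upwards [self_mem_nhdsWithin] with u hu
  have hu' : u - x ≠ 0 := sub_ne_zero.mpr hu
  rw [Pi.div_apply, slope_def_field, slope_def_field, hfx, hgx, sub_zero, sub_zero,
    div_div_div_cancel_right₀ hu']

theorem differentiableAt_div_mul_div_sub {𝕜 : Type*} [NontriviallyNormedField 𝕜]
    (R a b : 𝕜) {x : 𝕜} (hx : x ≠ 0) (hax : 1 - a * x ≠ 0) :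
    DifferentiableAt 𝕜 (fun u => R / u * (1 - b * u) / (1 - a * u)) x := by
  fun_prop (disch := assumption)

theorem tendsto_residue_ratio {𝕜 : Type*} [NontriviallyNormedField 𝕜] {ζ : 𝕜 → 𝕜} {v₀ w : 𝕜}
    (hv₀ : v₀ ≠ 0) (hw : w ≠ 0)
    (hζv₀ : DifferentiableAt 𝕜 ζ v₀) (hζv₀inv : DifferentiableAt 𝕜 ζ (1 / v₀))
    (hv₀w : ζ v₀ = w) (hv₀inv : ζ (1 / v₀) = -1 / w)
    (hden : v₀ ^ 2 * deriv ζ v₀ + w ^ 2 * deriv ζ (1 / v₀) ≠ 0) :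
    Tendsto (fun u => ζ (1 / u) * (ζ u - w) / (1 + ζ u * ζ (1 / u))) (𝓝[≠] v₀)
      (𝓝 (v₀ ^ 2 * deriv ζ v₀ / (v₀ ^ 2 * deriv ζ v₀ + w ^ 2 * deriv ζ (1 / v₀)))) := by
  set A := deriv ζ v₀
  set B := deriv ζ (1 / v₀)
  have hA : HasDerivAt ζ A v₀ := hζv₀.hasDerivAt
  have hinv : HasDerivAt (fun u : 𝕜 => ζ (1 / u)) (B * -(v₀ ^ 2)⁻¹) v₀ := by
    have hone_div : HasDerivAt (fun u : 𝕜 => 1 / u) (-(v₀ ^ 2)⁻¹) v₀ := by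
      simpa only [one_div] using hasDerivAt_inv hv₀
    exact hζv₀inv.hasDerivAt.comp v₀ hone_div
  have hnum := hinv.fun_mul (hA.sub_const w)
  have hden_deriv := (hA.fun_mul hinv).const_add 1
  have hnum0 : ζ (1 / v₀) * (ζ v₀ - w) = 0 := by rw [hv₀w, sub_self, mul_zero]
  have hden0 : 1 + ζ v₀ * ζ (1 / v₀) = 0 := by rw [hv₀w, hv₀inv]; field_simp; ring
  simp only [hv₀w, hv₀inv, sub_self] at hnum hden_deriv
  have hden_deriv_ne : A * (-1 / w) + w * (B * -(v₀ ^ 2)⁻¹) ≠ 0 := by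
    convert div_ne_zero (neg_ne_zero.mpr hden) (mul_ne_zero hw (pow_ne_zero 2 hv₀)) using 1
    field_simp
    ring
  convert tendsto_div_nhdsNE_of_hasDerivAt hnum hden_deriv hnum0 hden0 hden_deriv_ne using 2
  rw [div_eq_div_iff hden hden_deriv_ne]
  field_simp
  ring

theorem stmt_10_general (R a b : ℝ)
    (ζ : ℝ → ℝ) (hζ : ∀ u, ζ u = (R / u) * (1 - b * u) / (1 - a * u))
    (v₀ w : ℝ) (hv₀ : v₀ ≠ 0) (hw : w ≠ 0)
    (h1 : 1 - a * v₀ ≠ 0) (h2 : v₀ - a ≠ 0)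
    (h3 : ζ v₀ = w) (h4 : ζ (1 / v₀) = -1 / w)
    (h6 : v₀ ^ 2 * deriv ζ v₀ + w ^ 2 * deriv ζ (1 / v₀) ≠ 0) :
    Filter.Tendsto (fun u => ζ (1 / u) * (ζ u - w) / (1 + ζ u * ζ (1 / u)))
      (nhdsWithin v₀ {v₀}ᶜ)
      (nhds (v₀ ^ 2 * deriv ζ v₀ / (v₀ ^ 2 * deriv ζ v₀ + w ^ 2 * deriv ζ (1 / v₀)))) := by
  obtain rfl : ζ = fun u => R / u * (1 - b * u) / (1 - a * u) := funext hζ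
  have h2' : 1 - a * (1 / v₀) ≠ 0 := by
    rw [show 1 - a * (1 / v₀) = (v₀ - a) / v₀ by field_simp]
    exact div_ne_zero h2 hv₀
  exact tendsto_residue_ratio hv₀ hw (differentiableAt_div_mul_div_sub R a b hv₀ h1)
    (differentiableAt_div_mul_div_sub R a b (one_div_ne_zero hv₀) h2') h3 h4 h6

theorem stmt_10 (R a b : ℝ) (hR : R > 0)
    (ζ : ℝ → ℝ) (hζ : ∀ u, ζ u = (R / u) * (1 - b * u) / (1 - a * u))
    (v₀ w : ℝ) (hv₀ : v₀ ≠ 0) (hw : w ≠ 0)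
    (h1 : 1 - a * v₀ ≠ 0) (h2 : v₀ - a ≠ 0)
    (h3 : ζ v₀ = w) (h4 : ζ (1 / v₀) = -1 / w)
    (h5 : deriv ζ v₀ ≠ 0)
    (h6 : v₀ ^ 2 * deriv ζ v₀ + w ^ 2 * deriv ζ (1 / v₀) ≠ 0) :
    Filter.Tendsto (fun u => ζ (1 / u) * (ζ u - w) / (1 + ζ u * ζ (1 / u)))
      (nhdsWithin v₀ {v₀}ᶜ)
      (nhds (v₀ ^ 2 * deriv ζ v₀ / (v₀ ^ 2 * deriv ζ v₀ + w ^ 2 * deriv ζ (1 / v₀)))) :=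
  stmt_10_general R a b ζ hζ v₀ w hv₀ hw h1 h2 h3 h4 h6
end

section
/- For all Q₀ > 0, Q₁ > 0 and w > 0, the quartic polynomial p(α) = wQ₀ + (1 + 2Q₀ − (Q₀ + Q₁)w²)α − 3(1 + Q₀ + Q₁)wα² + (−1 − 2Q₁ + (2 + Q₀ + Q₁)w²)α³ + (1 + Q₁)wα⁴ has four distinct real roots, exactly two of which are positive and two of which are negative. -/
open Polynomial Filter

theorem stmt_13 (Q₀ Q₁ w : ℝ) (hQ₀ : Q₀ > 0) (hQ₁ : Q₁ > 0) (hw : w > 0) :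
    ∃ r₁ r₂ r₃ r₄ : ℝ, r₁ < r₂ ∧ r₂ < r₃ ∧ r₃ < r₄ ∧
      r₁ < 0 ∧ r₂ < 0 ∧ 0 < r₃ ∧ 0 < r₄ ∧
      ∀ α : ℝ,
        (w * Q₀ + (1 + 2 * Q₀ - (Q₀ + Q₁) * w ^ 2) * α - 3 * (1 + Q₀ + Q₁) * w * α ^ 2 +
            (-1 - 2 * Q₁ + (2 + Q₀ + Q₁) * w ^ 2) * α ^ 3 + (1 + Q₁) * w * α ^ 4 = 0) ↔
          (α = r₁ ∨ α = r₂ ∨ α = r₃ ∨ α = r₄) := by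
  set P : ℝ[X] := C ((1 + Q₁) * w) * X ^ 4 + C (-1 - 2 * Q₁ + (2 + Q₀ + Q₁) * w ^ 2) * X ^ 3 +
      C (-3 * ((1 + Q₀ + Q₁) * w)) * X ^ 2 + C (1 + 2 * Q₀ - (Q₀ + Q₁) * w ^ 2) * X +
      C (w * Q₀) with hP
  have hlc : (1 + Q₁) * w ≠ 0 := by positivity
  have heval : ∀ α : ℝ, P.eval α =
      w * Q₀ + (1 + 2 * Q₀ - (Q₀ + Q₁) * w ^ 2) * α - 3 * (1 + Q₀ + Q₁) * w * α ^ 2 +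
        (-1 - 2 * Q₁ + (2 + Q₀ + Q₁) * w ^ 2) * α ^ 3 + (1 + Q₁) * w * α ^ 4 := by
    intro α; simp [hP]; ring
  have hdeg : P.natDegree = 4 := by
    rw [hP]; compute_degree!
    push_neg
    exact ⟨by positivity, by positivity⟩
  have hdeg' : P.degree = 4 := by
    rw [Polynomial.degree_eq_natDegree (fun h => by simp [h] at hdeg), hdeg]; rfl
  have hP0 : P ≠ 0 := fun h => by simp [h] at hdeg
  have hcoeff4 : P.coeff 4 = (1 + Q₁) * w := by
    rw [hP]
    simp only [Polynomial.coeff_add, Polynomial.coeff_C_mul, Polynomial.coeff_X_pow,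
      Polynomial.coeff_C, Polynomial.coeff_X]
    norm_num
  have hlead : P.leadingCoeff = (1 + Q₁) * w := by
    rw [Polynomial.leadingCoeff, hdeg, hcoeff4]
  -- values at key points
  have hcont : Continuous fun x : ℝ => P.eval x := P.continuous_aeval
  have hval0 : P.eval 0 > 0 := by rw [heval]; nlinarith
  have hvalnw : P.eval (-w) < 0 := by
    have : P.eval (-w) = -((1 + Q₀) * w * (1 + w ^ 2) ^ 2) := by rw [heval]; ring
    rw [this]
    have h1 : (0:ℝ) < (1 + Q₀) * w * (1 + w ^ 2) ^ 2 := by positivity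
    linarith
  have hvaliw : P.eval w⁻¹ < 0 := by
    have hw0 : w ≠ 0 := ne_of_gt hw
    have : P.eval w⁻¹ = -(Q₁ * (1 + w ^ 2) ^ 2) / w ^ 3 := by
      rw [heval]; field_simp; ring
    rw [this]
    apply div_neg_of_neg_of_pos
    · have h1 : (0:ℝ) < Q₁ * (1 + w ^ 2) ^ 2 := by positivity
      linarith
    · positivity
  -- behavior at ±∞
  have htop : Tendsto (fun x : ℝ => P.eval x) atTop atTop := by
    apply Polynomial.tendsto_atTop_of_leadingCoeff_nonneg
    · rw [hdeg']; norm_num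
    · rw [hlead]; positivity
  -- find big points
  obtain ⟨b, hb⟩ : ∃ b : ℝ, b > w⁻¹ ∧ P.eval b > 0 := by
    have h1 := (htop.eventually_gt_atTop 0).and (eventually_gt_atTop w⁻¹)
    obtain ⟨b, hb1, hb2⟩ := h1.exists
    exact ⟨b, hb2, hb1⟩
  have hQc : (P.comp (-X)).leadingCoeff = (1 + Q₁) * w := by
    rw [Polynomial.leadingCoeff_comp (by simp), hlead]
    simp [Polynomial.leadingCoeff, hdeg, Polynomial.natDegree_neg]
    norm_num
  have hQnd : (P.comp (-X)).natDegree = 4 := by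
    rw [Polynomial.natDegree_comp, hdeg]
    simp [Polynomial.natDegree_neg]
  have hQ0 : P.comp (-X) ≠ 0 := fun h => by simp [h] at hQnd
  have hQdeg : (P.comp (-X)).degree = 4 := by
    rw [Polynomial.degree_eq_natDegree hQ0, hQnd]; rfl
  have hbot : Tendsto (fun x : ℝ => P.eval (-x)) atTop atTop := by
    have h := Polynomial.tendsto_atTop_of_leadingCoeff_nonneg (P := P.comp (-X))
      (by rw [hQdeg]; norm_num) (by rw [hQc]; positivity)
    simpa [Polynomial.eval_comp] using h
  obtain ⟨c, hc⟩ : ∃ c : ℝ, c > w ∧ P.eval (-c) > 0 := by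
    have h1 := (hbot.eventually_gt_atTop 0).and (eventually_gt_atTop w)
    obtain ⟨c, hc1, hc2⟩ := h1.exists
    exact ⟨c, hc2, hc1⟩
  -- IVT roots
  have hwinv : (0 : ℝ) < w⁻¹ := by positivity
  obtain ⟨r₁, hr₁m, hr₁⟩ : ∃ r ∈ Set.Ioo (-c) (-w), P.eval r = 0 := by
    have := intermediate_value_Ioo' (le_of_lt (by linarith [hc.1] : -c < -w))
      hcont.continuousOn (a := -c) (b := -w)
    exact this ⟨hvalnw, hc.2⟩
  obtain ⟨r₂, hr₂m, hr₂⟩ : ∃ r ∈ Set.Ioo (-w) 0, P.eval r = 0 := by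
    have := intermediate_value_Ioo (le_of_lt (by linarith : -w < 0))
      hcont.continuousOn (a := -w) (b := 0)
    exact this ⟨hvalnw, hval0⟩
  obtain ⟨r₃, hr₃m, hr₃⟩ : ∃ r ∈ Set.Ioo 0 w⁻¹, P.eval r = 0 := by
    have := intermediate_value_Ioo' (le_of_lt hwinv) hcont.continuousOn (a := 0) (b := w⁻¹)
    exact this ⟨hvaliw, hval0⟩
  obtain ⟨r₄, hr₄m, hr₄⟩ : ∃ r ∈ Set.Ioo w⁻¹ b, P.eval r = 0 := by
    have := intermediate_value_Ioo (le_of_lt hb.1) hcont.continuousOn (a := w⁻¹) (b := b)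
    exact this ⟨hvaliw, hb.2⟩
  obtain ⟨hr₁a, hr₁b⟩ := hr₁m
  obtain ⟨hr₂a, hr₂b⟩ := hr₂m
  obtain ⟨hr₃a, hr₃b⟩ := hr₃m
  obtain ⟨hr₄a, hr₄b⟩ := hr₄m
  have h12 : r₁ < r₂ := by linarith
  have h23 : r₂ < r₃ := by linarith
  have h34 : r₃ < r₄ := by linarith
  refine ⟨r₁, r₂, r₃, r₄, h12, h23, h34, by linarith, hr₂b, hr₃a, by linarith, ?_⟩
  -- roots finset
  have hmem : ∀ r : ℝ, P.eval r = 0 → r ∈ P.roots.toFinset := by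
    intro r hr
    rw [Multiset.mem_toFinset, Polynomial.mem_roots hP0]
    exact hr
  have hsub : ({r₁, r₂, r₃, r₄} : Finset ℝ) ⊆ P.roots.toFinset := by
    intro x hx
    simp only [Finset.mem_insert, Finset.mem_singleton] at hx
    rcases hx with rfl | rfl | rfl | rfl
    exacts [hmem _ hr₁, hmem _ hr₂, hmem _ hr₃, hmem _ hr₄]
  have hn1 : r₁ ∉ ({r₂, r₃, r₄} : Finset ℝ) := by
    simp only [Finset.mem_insert, Finset.mem_singleton]
    push_neg
    exact ⟨ne_of_lt h12, ne_of_lt (by linarith), ne_of_lt (by linarith)⟩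
  have hn2 : r₂ ∉ ({r₃, r₄} : Finset ℝ) := by
    simp only [Finset.mem_insert, Finset.mem_singleton]
    push_neg
    exact ⟨ne_of_lt h23, ne_of_lt (by linarith)⟩
  have hn3 : r₃ ∉ ({r₄} : Finset ℝ) := by
    simp only [Finset.mem_singleton]
    exact ne_of_lt h34
  have hcard4 : ({r₁, r₂, r₃, r₄} : Finset ℝ).card = 4 := by
    rw [Finset.card_insert_of_notMem hn1, Finset.card_insert_of_notMem hn2,
        Finset.card_insert_of_notMem hn3, Finset.card_singleton]
  have hcardle : P.roots.toFinset.card ≤ 4 := by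
    calc P.roots.toFinset.card ≤ Multiset.card P.roots := P.roots.toFinset_card_le
      _ ≤ P.natDegree := P.card_roots' 
      _ = 4 := hdeg
  have heqf : ({r₁, r₂, r₃, r₄} : Finset ℝ) = P.roots.toFinset :=
    Finset.eq_of_subset_of_card_le hsub (by rw [hcard4]; exact hcardle)
  intro α
  constructor
  · intro hα
    have : α ∈ P.roots.toFinset := hmem α (by rw [heval]; linarith)
    rw [← heqf] at this
    simpa using this
  · intro hα
    have : P.eval α = 0 := by
      rcases hα with rfl | rfl | rfl | rfl
      exacts [hr₁, hr₂, hr₃, hr₄]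
    rw [heval] at this
    linarith
end

section
/- Let Q₀ > 0 and Q₁ > 0, and for each w > 0 let α(w) denote the smallest positive root of the quartic p(α) = wQ₀ + (1 + 2Q₀ − (Q₀ + Q₁)w²)α − 3(1 + Q₀ + Q₁)wα² + (−1 − 2Q₁ + (2 + Q₀ + Q₁)w²)α³ + (1 + Q₁)wα⁴. Then w·α(w) → Q₀/(Q₀ + Q₁) as w → ∞. -/
noncomputable def quarticP (Q₀ Q₁ w α : ℝ) : ℝ :=
  w * Q₀ + (1 + 2 * Q₀ - (Q₀ + Q₁) * w ^ 2) * α - 3 * (1 + Q₀ + Q₁) * w * α ^ 2 +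
    (-1 - 2 * Q₁ + (2 + Q₀ + Q₁) * w ^ 2) * α ^ 3 + (1 + Q₁) * w * α ^ 4

lemma quarticP_key (Q₀ Q₁ w t : ℝ) (hw : w ≠ 0) :
    w * quarticP Q₀ Q₁ w (t / w) =
      w ^ 2 * (Q₀ - (Q₀ + Q₁) * t)
      + ((1 + 2 * Q₀) * t - 3 * (1 + Q₀ + Q₁) * t ^ 2 + (2 + Q₀ + Q₁) * t ^ 3)
      + ((-1 - 2 * Q₁) * t ^ 3 + (1 + Q₁) * t ^ 4) / w ^ 2 := by
  unfold quarticP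
  field_simp
  ring

lemma rbound (Q₀ Q₁ t : ℝ) (hQ₀ : 0 < Q₀) (hQ₁ : 0 < Q₁) (ht0 : 0 ≤ t) (ht2 : t ≤ 2) :
    |(1 + 2 * Q₀) * t - 3 * (1 + Q₀ + Q₁) * t ^ 2 + (2 + Q₀ + Q₁) * t ^ 3| ≤
      100 * (1 + Q₀ + Q₁) := by
  have h2 : t ^ 2 ≤ 4 := by
    calc t ^ 2 ≤ 2 ^ 2 := pow_le_pow_left₀ ht0 ht2 2
      _ = 4 := by norm_num
  have h3 : t ^ 3 ≤ 8 := by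
    calc t ^ 3 ≤ 2 ^ 3 := pow_le_pow_left₀ ht0 ht2 3
      _ = 8 := by norm_num
  have h2' : 0 ≤ t ^ 2 := by positivity
  have h3' : 0 ≤ t ^ 3 := by positivity
  rw [abs_le]
  constructor <;> nlinarith [mul_nonneg hQ₀.le h3', mul_nonneg hQ₁.le h3',
    mul_nonneg hQ₀.le h2', mul_nonneg hQ₁.le h2',
    mul_le_mul_of_nonneg_left h3 hQ₀.le, mul_le_mul_of_nonneg_left h3 hQ₁.le,
    mul_le_mul_of_nonneg_left h2 hQ₀.le, mul_le_mul_of_nonneg_left h2 hQ₁.le]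

lemma sbound (Q₀ Q₁ t : ℝ) (hQ₀ : 0 < Q₀) (hQ₁ : 0 < Q₁) (ht0 : 0 ≤ t) (ht2 : t ≤ 2) :
    |(-1 - 2 * Q₁) * t ^ 3 + (1 + Q₁) * t ^ 4| ≤ 100 * (1 + Q₀ + Q₁) := by
  have h3 : t ^ 3 ≤ 8 := by
    calc t ^ 3 ≤ 2 ^ 3 := pow_le_pow_left₀ ht0 ht2 3
      _ = 8 := by norm_num
  have h4 : t ^ 4 ≤ 16 := by
    calc t ^ 4 ≤ 2 ^ 4 := pow_le_pow_left₀ ht0 ht2 4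
      _ = 16 := by norm_num
  have h3' : 0 ≤ t ^ 3 := by positivity
  have h4' : 0 ≤ t ^ 4 := by positivity
  rw [abs_le]
  constructor <;> nlinarith [mul_nonneg hQ₁.le h3', mul_nonneg hQ₁.le h4',
    mul_le_mul_of_nonneg_left h3 hQ₁.le, mul_le_mul_of_nonneg_left h4 hQ₁.le]

theorem stmt_14 (Q₀ Q₁ : ℝ) (hQ₀ : Q₀ > 0) (hQ₁ : Q₁ > 0)
    (α : ℝ → ℝ)
    (hroot : ∀ w > (0 : ℝ), quarticP Q₀ Q₁ w (α w) = 0)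
    (hpos : ∀ w > (0 : ℝ), 0 < α w)
    (hmin : ∀ w > (0 : ℝ), ∀ x : ℝ, 0 < x → quarticP Q₀ Q₁ w x = 0 → α w ≤ x) :
    Filter.Tendsto (fun w => w * α w) Filter.atTop (nhds (Q₀ / (Q₀ + Q₁))) := by
  have hSpos : 0 < Q₀ + Q₁ := by linarith
  obtain ⟨S, hSdef⟩ : ∃ S : ℝ, S = Q₀ + Q₁ := ⟨_, rfl⟩
  rw [← hSdef] at hSpos
  obtain ⟨c, hcdef⟩ : ∃ c : ℝ, c = Q₀ / S := ⟨_, rfl⟩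
  have hcpos : 0 < c := by rw [hcdef]; positivity
  have hSc : S * c = Q₀ := by
    rw [hcdef]; field_simp
  have hc1 : c < 1 := by
    rw [hcdef, div_lt_one hSpos, hSdef]; linarith
  obtain ⟨M, hMdef⟩ : ∃ M : ℝ, M = 100 * (1 + Q₀ + Q₁) := ⟨_, rfl⟩
  have hMpos : 0 < M := by rw [hMdef]; positivity
  have hgoal : Q₀ / (Q₀ + Q₁) = c := by rw [hcdef, hSdef]
  rw [Metric.tendsto_atTop]
  intro ε hε
  obtain ⟨ε', hε'def⟩ : ∃ e : ℝ, e = min ε (c / 2) := ⟨_, rfl⟩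
  have hε'pos : 0 < ε' := by rw [hε'def]; exact lt_min hε (by positivity)
  have hε'le : ε' ≤ ε := by rw [hε'def]; exact min_le_left _ _
  have hε'c : ε' ≤ c / 2 := by rw [hε'def]; exact min_le_right _ _
  refine ⟨max 1 (Real.sqrt (2 * M / (S * ε')) + 1), fun w hw => ?_⟩
  have hw1 : (1 : ℝ) ≤ w := le_trans (le_max_left _ _) hw
  have hwpos : (0 : ℝ) < w := by linarith
  have hwne : w ≠ 0 := ne_of_gt hwpos
  have hw2ge1 : (1 : ℝ) ≤ w ^ 2 := by nlinarith
  have hw2' : 2 * M < w ^ 2 * (S * ε') := by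
    have h := le_trans (le_max_right _ _) hw
    have hs : Real.sqrt (2 * M / (S * ε')) < w := by linarith
    have hnn : (0:ℝ) ≤ 2 * M / (S * ε') := by positivity
    have h1 : 2 * M / (S * ε') < w ^ 2 := by
      calc 2 * M / (S * ε') = Real.sqrt (2 * M / (S * ε')) ^ 2 := (Real.sq_sqrt hnn).symm
        _ < w ^ 2 := by nlinarith [Real.sqrt_nonneg (2 * M / (S * ε'))]
    rw [div_lt_iff₀ (by positivity)] at h1
    linarith
  -- Upper bound: there is a root below (c + ε')/w
  obtain ⟨t₁, ht₁def⟩ : ∃ t : ℝ, t = c + ε' := ⟨_, rfl⟩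
  have ht₁0 : (0 : ℝ) ≤ t₁ := by rw [ht₁def]; positivity
  have ht₁2 : t₁ ≤ 2 := by
    rw [ht₁def]; nlinarith
  have hr1 := abs_le.mp (rbound Q₀ Q₁ t₁ hQ₀ hQ₁ ht₁0 ht₁2)
  have hs1 := abs_le.mp (sbound Q₀ Q₁ t₁ hQ₀ hQ₁ ht₁0 ht₁2)
  have hsdiv1 : ((-1 - 2 * Q₁) * t₁ ^ 3 + (1 + Q₁) * t₁ ^ 4) / w ^ 2 ≤ M ∧
      -M ≤ ((-1 - 2 * Q₁) * t₁ ^ 3 + (1 + Q₁) * t₁ ^ 4) / w ^ 2 := by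
    have habs : |((-1 - 2 * Q₁) * t₁ ^ 3 + (1 + Q₁) * t₁ ^ 4) / w ^ 2| ≤ M := by
      rw [hMdef, abs_div, abs_of_pos (by positivity : (0:ℝ) < w ^ 2)]
      exact le_trans (div_le_self (abs_nonneg _) hw2ge1) (abs_le.mpr hs1)
    exact ⟨(abs_le.mp habs).2, (abs_le.mp habs).1⟩
  have hQt₁ : Q₀ - S * t₁ = -(S * ε') := by
    rw [ht₁def, mul_add, hSc]; ring
  have hwp1 : w * quarticP Q₀ Q₁ w (t₁ / w) < 0 := by
    rw [quarticP_key Q₀ Q₁ w t₁ hwne, ← hSdef, hQt₁]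
    nlinarith [hsdiv1.1, hr1.2, hw2', hMdef]
  have hp1 : quarticP Q₀ Q₁ w (t₁ / w) < 0 := by
    rcases mul_neg_iff.mp hwp1 with ⟨_, h⟩ | ⟨h, _⟩
    · exact h
    · linarith
  have hcont : Continuous (quarticP Q₀ Q₁ w) := by
    show Continuous fun x : ℝ => w * Q₀ + (1 + 2 * Q₀ - (Q₀ + Q₁) * w ^ 2) * x - 3 * (1 + Q₀ + Q₁) * w * x ^ 2 + (-1 - 2 * Q₁ + (2 + Q₀ + Q₁) * w ^ 2) * x ^ 3 + (1 + Q₁) * w * x ^ 4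
    fun_prop
  have hp0 : quarticP Q₀ Q₁ w 0 = w * Q₀ := by
    unfold quarticP; ring
  have h0le : (0 : ℝ) ≤ t₁ / w := by positivity
  have hIVT := intermediate_value_Icc' h0le hcont.continuousOn
  have hmem : (0 : ℝ) ∈ Set.Icc (quarticP Q₀ Q₁ w (t₁ / w)) (quarticP Q₀ Q₁ w 0) := by
    constructor
    · exact hp1.le
    · rw [hp0]; positivity
  obtain ⟨x, hx, hpx⟩ := hIVT hmem
  have hx0 : 0 < x := by
    rcases eq_or_lt_of_le hx.1 with h | h
    · exfalso
      rw [← h, hp0] at hpx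
      exact absurd hpx (ne_of_gt (mul_pos hwpos hQ₀))
    · exact h
  have hxt : x < t₁ / w := by
    rcases eq_or_lt_of_le hx.2 with h | h
    · exfalso; rw [h] at hpx; rw [hpx] at hp1; exact lt_irrefl 0 hp1
    · exact h
  have hupper : w * α w < t₁ := by
    have h1 : α w ≤ x := hmin w hwpos x hx0 hpx
    have h2 : α w < t₁ / w := lt_of_le_of_lt h1 hxt
    calc w * α w < w * (t₁ / w) := by exact (mul_lt_mul_iff_right₀ hwpos).mpr h2
      _ = t₁ := by field_simp
  -- Lower bound
  have hlower : c - ε' < w * α w := by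
    by_contra h
    push_neg at h
    obtain ⟨t, htdef⟩ : ∃ t : ℝ, t = w * α w := ⟨_, rfl⟩
    rw [← htdef] at h
    have ht0 : 0 < t := by rw [htdef]; exact mul_pos hwpos (hpos w hwpos)
    have ht2 : t ≤ 2 := by linarith
    have htα : t / w = α w := by rw [htdef]; field_simp
    have hkey := quarticP_key Q₀ Q₁ w t hwne
    rw [htα, hroot w hwpos, mul_zero] at hkey
    have hr2 := abs_le.mp (rbound Q₀ Q₁ t hQ₀ hQ₁ ht0.le ht2)
    have hs2 := abs_le.mp (sbound Q₀ Q₁ t hQ₀ hQ₁ ht0.le ht2)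
    have hsdiv2 : -M ≤ ((-1 - 2 * Q₁) * t ^ 3 + (1 + Q₁) * t ^ 4) / w ^ 2 := by
      have habs : |((-1 - 2 * Q₁) * t ^ 3 + (1 + Q₁) * t ^ 4) / w ^ 2| ≤ M := by
        rw [hMdef, abs_div, abs_of_pos (by positivity : (0:ℝ) < w ^ 2)]
        exact le_trans (div_le_self (abs_nonneg _) hw2ge1) (abs_le.mpr hs2)
      exact (abs_le.mp habs).1
    have hQt : S * ε' ≤ Q₀ - S * t := by
      have : S * t ≤ S * (c - ε') := by
        apply mul_le_mul_of_nonneg_left h hSpos.le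
      rw [mul_sub, hSc] at this
      linarith
    have hge : 0 < w ^ 2 * (Q₀ - S * t)
        + ((1 + 2 * Q₀) * t - 3 * (1 + Q₀ + Q₁) * t ^ 2 + (2 + Q₀ + Q₁) * t ^ 3)
        + ((-1 - 2 * Q₁) * t ^ 3 + (1 + Q₁) * t ^ 4) / w ^ 2 := by
      have h1 : w ^ 2 * (S * ε') ≤ w ^ 2 * (Q₀ - S * t) := by
        apply mul_le_mul_of_nonneg_left hQt (by positivity)
      linarith [h1, hw2', hr2.1, hsdiv2, hMdef]
    rw [← hSdef] at hkey
    linarith [hkey, hge]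
  rw [Real.dist_eq, hgoal, abs_lt]
  constructor <;> [skip; skip]
  · have : c - ε ≤ c - ε' := by linarith
    linarith
  · have : c + ε' ≤ c + ε := by linarith
    rw [ht₁def] at hupper
    linarith
end

section
/- Let Q₀ > 0 and w_s > 1 with Q₀(w_s² − 1) > 1. Set w = (w_s − 1/w_s)/2, α = 1/w_s, β = (1 + Q₀)α/Q₀, 𝒜 = (1 + α²)/(β + w + (1 − βw)α), R² = ((β + w)𝒜 − 1)/(αw𝒜²), and v₀ = R𝒜. Then R² = (1 + Q₀(w_s² + 1))/(2Q₀²(w_s² − 1)) and v₀² = 2w_s²/(Q₀w_s⁴ + w_s² − (1 + Q₀)); moreover Q₀w_s⁴ + w_s² − (1 + Q₀) > 2w_s², so that 0 < v₀² < 1. -/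
theorem stmt_15 (Q₀ ws : ℝ) (hQ : Q₀ > 0) (hws : ws > 1) (hc : Q₀ * (ws ^ 2 - 1) > 1)
    (w α β A R v₀ : ℝ)
    (hw : w = (ws - 1 / ws) / 2)
    (hα : α = 1 / ws)
    (hβ : β = (1 + Q₀) * α / Q₀)
    (hA : A = (1 + α ^ 2) / (β + w + (1 - β * w) * α))
    (hR : R ^ 2 = ((β + w) * A - 1) / (α * w * A ^ 2))
    (hv : v₀ = R * A) :
    R ^ 2 = (1 + Q₀ * (ws ^ 2 + 1)) / (2 * Q₀ ^ 2 * (ws ^ 2 - 1)) ∧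
    v₀ ^ 2 = 2 * ws ^ 2 / (Q₀ * ws ^ 4 + ws ^ 2 - (1 + Q₀)) ∧
    Q₀ * ws ^ 4 + ws ^ 2 - (1 + Q₀) > 2 * ws ^ 2 ∧
    0 < v₀ ^ 2 ∧ v₀ ^ 2 < 1 := by
  have hws0 : ws ≠ 0 := by nlinarith
  have hwspos : (0:ℝ) < ws := by linarith
  have hws2 : ws ^ 2 - 1 > 0 := by nlinarith
  have hD : Q₀ * (ws ^ 2 + 1) + 1 > 0 := by nlinarith
  have hQ0 : Q₀ ≠ 0 := ne_of_gt hQ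
  have hD0 : Q₀ * (ws ^ 2 + 1) + 1 ≠ 0 := ne_of_gt hD
  -- denominator of A
  have hden : β + w + (1 - β * w) * α
      = (ws ^ 2 + 1) * (Q₀ * (ws ^ 2 + 1) + 1) / (2 * Q₀ * ws ^ 3) := by
    subst hβ hα hw
    field_simp
    ring
  have hA' : A = 2 * Q₀ * ws / (Q₀ * (ws ^ 2 + 1) + 1) := by
    rw [hA, hden, hα]
    field_simp
  have hApos : A > 0 := by
    rw [hA']
    positivity
  have hnum : (β + w) * A - 1 = 1 / (Q₀ * (ws ^ 2 + 1) + 1) := by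
    rw [hA', hβ, hα, hw]
    field_simp
    ring_nf
  have hden2 : α * w * A ^ 2 = 2 * Q₀ ^ 2 * (ws ^ 2 - 1) / (Q₀ * (ws ^ 2 + 1) + 1) ^ 2 := by
    rw [hA', hα, hw]
    field_simp
  have hR' : R ^ 2 = (Q₀ * (ws ^ 2 + 1) + 1) / (2 * Q₀ ^ 2 * (ws ^ 2 - 1)) := by
    rw [hR, hnum, hden2]
    rw [div_div_div_eq]
    rw [one_mul]
    rw [pow_two]
    rw [div_mul_eq_div_div, mul_div_assoc, div_self hD0, mul_one]
  have h1 : R ^ 2 = (1 + Q₀ * (ws ^ 2 + 1)) / (2 * Q₀ ^ 2 * (ws ^ 2 - 1)) := by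
    rw [hR']; ring_nf
  have hE0 : Q₀ * ws ^ 4 + ws ^ 2 - (1 + Q₀) = (ws ^ 2 - 1) * (Q₀ * (ws ^ 2 + 1) + 1) := by
    ring
  have h2 : v₀ ^ 2 = 2 * ws ^ 2 / (Q₀ * ws ^ 4 + ws ^ 2 - (1 + Q₀)) := by
    rw [hv, mul_pow, hR', hA', hE0]
    rw [div_pow]
    field_simp
  have h3 : Q₀ * ws ^ 4 + ws ^ 2 - (1 + Q₀) > 2 * ws ^ 2 := by
    nlinarith [hc, hws2]
  have hEpos : Q₀ * ws ^ 4 + ws ^ 2 - (1 + Q₀) > 0 := by nlinarith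
  refine ⟨h1, h2, h3, ?_, ?_⟩
  · rw [h2]; positivity
  · rw [h2]
    rw [div_lt_one hEpos]
    linarith
end

section
/- Let Q₀ > 0, Q₁ > 0 and w > 0, and set γ₁ = −1 + Q₀/Q₁ and γ₂ = 1/Q₁. Then the inequality 1/(1 + w²) > (1/(γ₁ + γ₂ + 2)²)(√((γ₁ + 1)(γ₁ + γ₂ + 1)) + √(γ₂ + 1))² holds if and only if w < (2Q₀Q₁ + Q₀ + Q₁ + 2√(Q₀Q₁(1 + Q₀)(1 + Q₁)))^{−1/2}. Equivalently, the critical value of the threshold equals (√(Q₀(Q₀ + 1)) + √(Q₁(Q₁ + 1)))²/(Q₀ + Q₁ + 1)². -/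
theorem stmt_16 (Q₀ Q₁ w : ℝ) (hQ₀ : Q₀ > 0) (hQ₁ : Q₁ > 0) (hw : w > 0)
    (γ₁ γ₂ : ℝ) (hγ₁ : γ₁ = -1 + Q₀ / Q₁) (hγ₂ : γ₂ = 1 / Q₁) :
    (1 / (1 + w ^ 2) >
        (1 / (γ₁ + γ₂ + 2) ^ 2) *
          (Real.sqrt ((γ₁ + 1) * (γ₁ + γ₂ + 1)) + Real.sqrt (γ₂ + 1)) ^ 2 ↔
      w < 1 / Real.sqrt (2 * Q₀ * Q₁ + Q₀ + Q₁ +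
        2 * Real.sqrt (Q₀ * Q₁ * (1 + Q₀) * (1 + Q₁)))) ∧
    (1 / (γ₁ + γ₂ + 2) ^ 2) *
        (Real.sqrt ((γ₁ + 1) * (γ₁ + γ₂ + 1)) + Real.sqrt (γ₂ + 1)) ^ 2 =
      (Real.sqrt (Q₀ * (Q₀ + 1)) + Real.sqrt (Q₁ * (Q₁ + 1))) ^ 2 / (Q₀ + Q₁ + 1) ^ 2 := by
  have hQ₁' : Q₁ ≠ 0 := ne_of_gt hQ₁
  set a := Real.sqrt (Q₀ * (Q₀ + 1)) with ha
  set b := Real.sqrt (Q₁ * (Q₁ + 1)) with hb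
  have ha0 : 0 < a := Real.sqrt_pos.2 (by positivity)
  have hb0 : 0 < b := Real.sqrt_pos.2 (by positivity)
  have ha2 : a ^ 2 = Q₀ * (Q₀ + 1) := Real.sq_sqrt (by positivity)
  have hb2 : b ^ 2 = Q₁ * (Q₁ + 1) := Real.sq_sqrt (by positivity)
  have hab : Real.sqrt (Q₀ * Q₁ * (1 + Q₀) * (1 + Q₁)) = a * b := by
    rw [ha, hb, ← Real.sqrt_mul (by positivity)]
    congr 1; ring
  have hQsum : Q₀ + Q₁ + 1 ≠ 0 := by positivity
  have hsqQ₁ : Real.sqrt (Q₁ ^ 2) = Q₁ := Real.sqrt_sq hQ₁.le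
  -- Part 2
  have heq : (1 / (γ₁ + γ₂ + 2) ^ 2) *
      (Real.sqrt ((γ₁ + 1) * (γ₁ + γ₂ + 1)) + Real.sqrt (γ₂ + 1)) ^ 2 =
      (a + b) ^ 2 / (Q₀ + Q₁ + 1) ^ 2 := by
    have e1 : (γ₁ + 1) * (γ₁ + γ₂ + 1) = Q₀ * (Q₀ + 1) / Q₁ ^ 2 := by
      rw [hγ₁, hγ₂]; field_simp; ring
    have e2 : γ₂ + 1 = Q₁ * (Q₁ + 1) / Q₁ ^ 2 := by
      rw [hγ₂]; field_simp; ring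
    have e3 : γ₁ + γ₂ + 2 = (Q₀ + Q₁ + 1) / Q₁ := by
      rw [hγ₁, hγ₂]; field_simp; ring
    have s1 : Real.sqrt ((γ₁ + 1) * (γ₁ + γ₂ + 1)) = a / Q₁ := by
      rw [e1, Real.sqrt_div (by positivity), hsqQ₁]
    have s2 : Real.sqrt (γ₂ + 1) = b / Q₁ := by
      rw [e2, Real.sqrt_div (by positivity), hsqQ₁]
    rw [s1, s2, e3]
    field_simp
  refine ⟨?_, heq⟩
  -- Part 1
  rw [heq, hab]
  set S := (a + b) ^ 2 with hS
  set T := 2 * Q₀ * Q₁ + Q₀ + Q₁ + 2 * (a * b) with hT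
  have hT0 : 0 < T := by rw [hT]; positivity
  set t := Real.sqrt T with ht
  have ht0 : 0 < t := Real.sqrt_pos.2 hT0
  have ht2 : t ^ 2 = T := Real.sq_sqrt hT0.le
  have hS0 : 0 < S := by positivity
  set D := (Q₀ + Q₁ + 1) ^ 2 with hDdef
  have key : T * (D - S) = S := by
    have habsq : (a * b) ^ 2 = Q₀ * (Q₀ + 1) * (Q₁ * (Q₁ + 1)) := by
      rw [mul_pow, ha2, hb2]
    rw [hT, hS, hDdef]
    linear_combination (-(2*Q₀*Q₁+Q₀+Q₁) - 2*(a*b) - 1) * ha2 +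
      (-(2*Q₀*Q₁+Q₀+Q₁) - 2*(a*b) - 1) * hb2 + (-4 : ℝ) * habsq
  have h1w : (0:ℝ) < 1 + w ^ 2 := by positivity
  have hD0 : (0:ℝ) < D := by rw [hDdef]; positivity
  have step1 : 1 / (1 + w ^ 2) > S / D ↔ w ^ 2 * T < 1 := by
    rw [gt_iff_lt, div_lt_div_iff₀ hD0 h1w]
    constructor <;> intro h
    · have h3 : S * w ^ 2 < D - S := by linarith
      have h2 : S * (w ^ 2 * T) < S * 1 := by
        calc S * (w ^ 2 * T) = T * (S * w ^ 2) := by ring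
          _ < T * (D - S) := mul_lt_mul_of_pos_left h3 hT0
          _ = S * 1 := by rw [key, mul_one]
      exact lt_of_mul_lt_mul_left h2 hS0.le
    · have h2 : T * (S * w ^ 2) < T * (D - S) := by
        calc T * (S * w ^ 2) = S * (w ^ 2 * T) := by ring
          _ < S * 1 := mul_lt_mul_of_pos_left h hS0
          _ = T * (D - S) := by rw [mul_one]; exact key.symm
      have h3 : S * w ^ 2 < D - S := lt_of_mul_lt_mul_left h2 hT0.le
      linarith
  rw [step1, lt_div_iff₀ ht0]
  have hwt0 : 0 < w * t := mul_pos hw ht0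
  constructor <;> intro h
  · have hwt : (w * t) ^ 2 < 1 := by rw [mul_pow, ht2]; exact h
    have h' := (sq_lt_one_iff_abs_lt_one (w * t)).mp hwt
    rwa [abs_of_pos hwt0] at h'
  · have hwt : (w * t) ^ 2 < 1 :=
      (sq_lt_one_iff_abs_lt_one (w * t)).mpr (by rwa [abs_of_pos hwt0])
    rw [← ht2, ← mul_pow]; exact hwt
end

section
/- Let Q > 0 and Z ∈ ℂ with |Z| ≥ 1/√Q. Then ((1 + Q)/π) ∫_{{z ∈ ℂ : |z| < 1/√Q}} log|Z − z|²/(1 + |z|²)² dA(z) = log|Z|², where dA denotes two-dimensional Lebesgue (area) measure on ℂ. -/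
/-!
In polar coordinates `z = s e^{iθ}` the weight `(1 + s²)⁻²` is constant on each circle, and for
`s ≤ ‖Z‖` the circle average of `log ‖Z - ·‖` is `log ‖Z‖` (Jensen's formula; `log ‖Z - ·‖` is
harmonic inside the circle). Hence the integral equals
`4π log ‖Z‖ ∫₀ʳ s (1 + s²)⁻² ds = 2π log ‖Z‖ · r² / (1 + r²)`, and `r² = 1/Q` gives the claim.
When `‖Z‖ = r` the logarithmic singularity sits on the boundary circle; Fubini still applies
since `|log ‖Z - s e^{iθ}‖| ≤ |log (‖Z‖ - s)| + |log (‖Z‖ + s)|`, which is integrable in `s`.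
-/

open MeasureTheory Set Metric Real

theorem Complex.polarCoord_symm_eq_circleMap (p : ℝ × ℝ) :
    Complex.polarCoord.symm p = circleMap 0 p.1 p.2 := by
  simp [circleMap, Complex.exp_mul_I, Complex.ofReal_cos, Complex.ofReal_sin]

theorem continuous_circleMap_uncurry (c : ℂ) :
    Continuous fun p : ℝ × ℝ => circleMap c p.1 p.2 := by
  unfold circleMap; fun_prop

theorem integral_Ioo_neg_pi_pi_comp_circleMap {E : Type*} [NormedAddCommGroup E]
    [NormedSpace ℝ E] (f : ℂ → E) (c : ℂ) (R : ℝ) :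
    ∫ θ in Ioo (-π) π, f (circleMap c R θ) = (2 * π) • circleAverage f c R := by
  rw [circleAverage_eq_integral_add (-π), smul_inv_smul₀ (by positivity),
    intervalIntegral.integral_comp_add_right (fun θ => f (circleMap c R θ)), zero_add,
    ← integral_Ioc_eq_integral_Ioo, intervalIntegral.integral_of_le (by linarith [pi_pos]),
    show 2 * π + -π = π by ring]

theorem integral_ball_eq_integral_smul_circleAverage {E : Type*} [NormedAddCommGroup E]
    [NormedSpace ℝ E] (f : ℂ → E) (r : ℝ)
    (hf : IntegrableOn (fun p : ℝ × ℝ => p.1 • f (circleMap 0 p.1 p.2))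
      (Ioo 0 r ×ˢ Ioo (-π) π)) :
    ∫ z in ball (0 : ℂ) r, f z = (2 * π) • ∫ s in Ioo 0 r, s • circleAverage f 0 s := by
  have hT : polarCoord.target ∩ (Iio r ×ˢ univ) = Ioo 0 r ×ˢ Ioo (-π) π := by
    ext ⟨s, θ⟩; simp [polarCoord_target]; tauto
  calc ∫ z in ball (0 : ℂ) r, f z
      = ∫ p in polarCoord.target,
          p.1 • (ball (0 : ℂ) r).indicator f (Complex.polarCoord.symm p) := by
        rw [Complex.integral_comp_polarCoord_symm, integral_indicator measurableSet_ball]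
    _ = ∫ p in polarCoord.target,
          (Iio r ×ˢ univ).indicator (fun p : ℝ × ℝ => p.1 • f (circleMap 0 p.1 p.2)) p := by
        refine setIntegral_congr_fun polarCoord.open_target.measurableSet fun p hp => ?_
        have hp : 0 < p.1 := hp.1
        rw [Complex.polarCoord_symm_eq_circleMap]
        by_cases hpr : p.1 < r <;> simp [Set.indicator, hpr, abs_of_pos hp]
    _ = ∫ s in Ioo 0 r, ∫ θ in Ioo (-π) π, s • f (circleMap 0 s θ) := by
        rw [setIntegral_indicator (measurableSet_Iio.prod MeasurableSet.univ), hT]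
        exact setIntegral_prod _ hf
    _ = (2 * π) • ∫ s in Ioo 0 r, s • circleAverage f 0 s := by
        simp_rw [integral_smul, integral_Ioo_neg_pi_pi_comp_circleMap, smul_comm _ (2 * π),
          integral_smul]

theorem circleAverage_log_norm_sub_const_of_le_norm {a c : ℂ} {R : ℝ} (hR : 0 < R)
    (h : R ≤ ‖c - a‖) : circleAverage (log ‖· - a‖) c R = log ‖c - a‖ := by
  have hca : 0 < ‖c - a‖ := hR.trans_le h
  rw [circleAverage_log_norm_sub_const_eq_log_radius_add_posLog hR.ne',
    posLog_eq_log (by rw [abs_of_pos (by positivity), inv_mul_eq_div, one_le_div₀ hR]; exact h),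
    log_mul (inv_ne_zero hR.ne') hca.ne', log_inv]
  ring

theorem abs_log_le_abs_log_add_abs_log {a b x : ℝ} (ha : 0 < a) (hax : a ≤ x) (hxb : x ≤ b) :
    |log x| ≤ |log a| + |log b| :=
  (abs_le_max_abs_abs (log_le_log ha hax) (log_le_log (ha.trans_le hax) hxb)).trans
    (max_le_add_of_nonneg (abs_nonneg _) (abs_nonneg _))

theorem integrableOn_mul_log_norm_sub_circleMap {Z : ℂ} {r : ℝ} (hr : r ≤ ‖Z‖) :
    IntegrableOn (fun p : ℝ × ℝ => p.1 * log ‖Z - circleMap 0 p.1 p.2‖)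
      (Ioo 0 r ×ˢ Ioo (-π) π) := by
  set bound : ℝ → ℝ := fun s => r * (|log (‖Z‖ - s)| + |log (‖Z‖ + s)|)
  have hbound : IntegrableOn bound (Ioo 0 r) := by
    have hsub : IntervalIntegrable (fun s => log (‖Z‖ - s)) volume 0 r := by
      simpa using
        (intervalIntegral.intervalIntegrable_log' (a := ‖Z‖) (b := ‖Z‖ - r)).comp_sub_left ‖Z‖
    have hadd : IntervalIntegrable (fun s => log (‖Z‖ + s)) volume 0 r := by
      simpa using
        (intervalIntegral.intervalIntegrable_log' (a := ‖Z‖) (b := ‖Z‖ + r)).comp_add_left ‖Z‖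
    exact (((hsub.abs.add hadd.abs).const_mul r).1).mono_set Ioo_subset_Ioc_self
  have hbound_prod : IntegrableOn (fun p : ℝ × ℝ => bound p.1) (Ioo 0 r ×ˢ Ioo (-π) π) := by
    rw [IntegrableOn, Measure.volume_eq_prod, ← Measure.prod_restrict]
    exact hbound.comp_fst _
  refine hbound_prod.mono' ?_ ?_
  · exact (measurable_fst.mul (measurable_log.comp (continuous_const.sub
      (continuous_circleMap_uncurry 0)).norm.measurable)).aestronglyMeasurable
  · filter_upwards [ae_restrict_mem (measurableSet_Ioo.prod measurableSet_Ioo)]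
      with ⟨s, θ⟩ ⟨⟨hs, hsr⟩, _⟩
    have hw : ‖circleMap 0 s θ‖ = s := by rw [norm_circleMap_zero, abs_of_pos hs]
    have hlog : |log ‖Z - circleMap 0 s θ‖| ≤ |log (‖Z‖ - s)| + |log (‖Z‖ + s)| := by
      refine abs_log_le_abs_log_add_abs_log (by linarith) ?_ ?_
      · simpa [hw] using norm_sub_norm_le Z (circleMap 0 s θ)
      · simpa [hw] using norm_sub_le Z (circleMap 0 s θ)
    rw [norm_mul, Real.norm_of_nonneg hs.le, Real.norm_eq_abs]
    exact mul_le_mul hsr.le hlog (abs_nonneg _) (hs.le.trans hsr.le)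

theorem integral_div_one_add_sq_sq (r : ℝ) :
    ∫ s in 0..r, s / (1 + s ^ 2) ^ 2 = r ^ 2 / (2 * (1 + r ^ 2)) := by
  have hderiv : ∀ x ∈ uIcc 0 r,
      HasDerivAt (fun y : ℝ => -(1 / 2) * (1 + y ^ 2)⁻¹) (x / (1 + x ^ 2) ^ 2) x := by
    intro x _
    have h := (((hasDerivAt_pow 2 x).const_add 1).inv (by positivity)).const_mul (-(1 / 2) : ℝ)
    exact h.congr_deriv (by push_cast; ring)
  have hcont : Continuous fun s : ℝ => s / (1 + s ^ 2) ^ 2 :=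
    continuous_id.div (by fun_prop) fun s => by positivity
  rw [intervalIntegral.integral_eq_sub_of_hasDerivAt hderiv (hcont.intervalIntegrable 0 r)]
  field_simp
  ring

theorem circleAverage_log_norm_sub_sq_div {Z : ℂ} {s : ℝ} (hs : 0 < s) (hsZ : s ≤ ‖Z‖) :
    circleAverage (fun z => log (‖Z - z‖ ^ 2) / (1 + ‖z‖ ^ 2) ^ 2) 0 s =
      2 / (1 + s ^ 2) ^ 2 * log ‖Z‖ := by
  have hsphere : EqOn (fun z => log (‖Z - z‖ ^ 2) / (1 + ‖z‖ ^ 2) ^ 2)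
      (fun z => (2 / (1 + s ^ 2) ^ 2) • log ‖z - Z‖) (sphere 0 |s|) := by
    intro z hz
    rw [mem_sphere_zero_iff_norm] at hz
    simp only [hz, sq_abs, log_pow, norm_sub_rev Z z, smul_eq_mul]
    ring
  rw [circleAverage_congr_sphere hsphere, circleAverage_fun_smul,
    circleAverage_log_norm_sub_const_of_le_norm hs (by rwa [zero_sub, norm_neg]), zero_sub,
    norm_neg, smul_eq_mul]

theorem integrableOn_smul_log_norm_sub_sq_div_circleMap {Z : ℂ} {r : ℝ} (hr : r ≤ ‖Z‖) :
    IntegrableOn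
      (fun p : ℝ × ℝ => p.1 • (log (‖Z - circleMap 0 p.1 p.2‖ ^ 2) /
        (1 + ‖circleMap 0 p.1 p.2‖ ^ 2) ^ 2)) (Ioo 0 r ×ˢ Ioo (-π) π) := by
  have hweight : ∀ p : ℝ × ℝ, ‖2 / (1 + p.1 ^ 2) ^ 2‖ ≤ 2 := fun p => by
    rw [Real.norm_of_nonneg (by positivity)]
    exact div_le_self zero_le_two (one_le_pow₀ (by nlinarith))
  have hfactor : (fun p : ℝ × ℝ => p.1 • (log (‖Z - circleMap 0 p.1 p.2‖ ^ 2) /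
        (1 + ‖circleMap 0 p.1 p.2‖ ^ 2) ^ 2)) =
      fun p => 2 / (1 + p.1 ^ 2) ^ 2 * (p.1 * log ‖Z - circleMap 0 p.1 p.2‖) := by
    ext p
    simp only [norm_circleMap_zero, sq_abs, log_pow, smul_eq_mul]
    ring
  rw [hfactor]
  exact (integrableOn_mul_log_norm_sub_circleMap hr).bdd_mul
    (by fun_prop : Measurable fun p : ℝ × ℝ => 2 / (1 + p.1 ^ 2) ^ 2).aestronglyMeasurable
    (.of_forall hweight)

theorem stmt_18 (Q : ℝ) (hQ : 0 < Q) (Z : ℂ) (hZ : 1 / Real.sqrt Q ≤ ‖Z‖) :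
    ((1 + Q) / Real.pi) *
        ∫ z in {z : ℂ | ‖z‖ < 1 / Real.sqrt Q},
          Real.log (‖Z - z‖ ^ 2) / (1 + ‖z‖ ^ 2) ^ 2 =
      Real.log (‖Z‖ ^ 2) := by
  set r := 1 / √Q
  have hr : 0 < r := by positivity
  have hr2 : r ^ 2 = Q⁻¹ := by simp [r, sq_sqrt hQ.le]
  rw [← ball_zero_eq, integral_ball_eq_integral_smul_circleAverage _ r
      (integrableOn_smul_log_norm_sub_sq_div_circleMap hZ),
    setIntegral_congr_fun measurableSet_Ioo fun s hs => by
      rw [circleAverage_log_norm_sub_sq_div hs.1 (hs.2.le.trans hZ)],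
    ← integral_Ioc_eq_integral_Ioo, ← intervalIntegral.integral_of_le hr.le]
  simp only [smul_eq_mul]
  rw [intervalIntegral.integral_congr (g := fun s => 2 * log ‖Z‖ * (s / (1 + s ^ 2) ^ 2))
      fun s _ => by ring, intervalIntegral.integral_const_mul, integral_div_one_add_sq_sq,
    hr2, log_pow]
  field_simp
  ring
end
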